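/- arXiv:1703.07319 — 3 statements merged into one kernel-verified Lean document; each statement's English description precedes it below -/
import Mathlib

section
/- Let 𝕂 be a field and C a 𝕂-linear category admitting a dominating family {V_i}_{i∈I} of simple objects. Then for all objects V, W of C, the 𝕂-linear map ⊕_{i∈I} Hom(V, V_i) ⊗_𝕂 Hom(V_i, W) → Hom(V, W) defined on each direct summand by f ⊗ g ↦ g ∘ f is an isomorphism of 𝕂-vector spaces (the direct sum has only finitely many nonzero summands). -/
open CategoryTheory

/-- An object `U` of a `𝕂`-linear category is *simple* if its endomorphism space is
one-dimensional over `𝕂`, spanned by the identity. -/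
def IsSimpleObject (𝕂 : Type*) [Field 𝕂] {C : Type*} [Category C]
    [Preadditive C] [Linear 𝕂 C] (U : C) : Prop :=
  𝟙 U ≠ 0 ∧ ∀ f : U ⟶ U, ∃ c : 𝕂, f = c • 𝟙 U

/-- A family `{V i}_{i ∈ I}` of objects of a `𝕂`-linear category is a *dominating family of
simple objects* if each `V i` is simple, `Hom(V i, V j) = 0` for `i ≠ j`, and every object `X`
admits finitely many morphisms `α k : V (ι k) ⟶ X`, `β k : X ⟶ V (ι k)` with
`𝟙 X = ∑ k, β k ≫ α k`. -/
structure IsDominatingFamily (𝕂 : Type*) [Field 𝕂] {C : Type*} [Category C]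
    [Preadditive C] [Linear 𝕂 C] {I : Type*} (V : I → C) : Prop where
  simple : ∀ i, IsSimpleObject 𝕂 (V i)
  hom_eq_zero : ∀ ⦃i j : I⦄, i ≠ j → ∀ f : V i ⟶ V j, f = 0
  dominates : ∀ X : C, ∃ (n : ℕ) (ι : Fin n → I) (α : ∀ k, V (ι k) ⟶ X)
      (β : ∀ k, X ⟶ V (ι k)), 𝟙 X = ∑ k, β k ≫ α k

/-!
Fix a decomposition `𝟙 X = ∑ k, β k ≫ α k` through the dominating family. Then
`h ↦ ∑ k, β k ⊗ (α k ≫ h)` is a right inverse of the composition map. It is also a left inverse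
because the morphism `α k ≫ f : V (ι k) ⟶ V i` can be moved across the tensor sign, from the
summand of index `ι k` to that of index `i`: it vanishes when `ι k ≠ i` and is a scalar multiple
of the identity when `ι k = i`.
-/
open TensorProduct DirectSum

theorem CategoryTheory.Preadditive.sum_comp_comp_eq_self {C : Type*} [Category C] [Preadditive C] {J : Type*}
    [Fintype J] {X Y : C} {Z : J → C} {α : ∀ k, Z k ⟶ X} {β : ∀ k, X ⟶ Z k}
    (hαβ : ∑ k, β k ≫ α k = 𝟙 X) (h : X ⟶ Y) : ∑ k, β k ≫ α k ≫ h = h := by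
  simp_rw [← Category.assoc, ← Preadditive.sum_comp, hαβ, Category.id_comp]

namespace IsDominatingFamily

variable (𝕂 : Type*) [Field 𝕂] {C : Type*} [Category C] [Preadditive C] [Linear 𝕂 C]
  {I : Type*} [DecidableEq I] (V : I → C) (X W : C)

noncomputable def compSum : (⨁ i, (X ⟶ V i) ⊗[𝕂] (V i ⟶ W)) →ₗ[𝕂] (X ⟶ W) :=
  toModule 𝕂 I (X ⟶ W) fun i => lift (Linear.comp X (V i) W)

@[simp]
theorem compSum_lof_tmul (i : I) (f : X ⟶ V i) (g : V i ⟶ W) :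
    compSum 𝕂 V X W (lof 𝕂 I _ i (f ⊗ₜ g)) = f ≫ g := by
  simp [compSum]

variable {X} {n : ℕ} {ι : Fin n → I}

noncomputable def splitSum (α : ∀ k, V (ι k) ⟶ X) (β : ∀ k, X ⟶ V (ι k)) :
    (X ⟶ W) →ₗ[𝕂] ⨁ i, (X ⟶ V i) ⊗[𝕂] (V i ⟶ W) :=
  ∑ k, lof 𝕂 I _ (ι k) ∘ₗ TensorProduct.mk 𝕂 _ _ (β k) ∘ₗ Linear.leftComp 𝕂 W (α k)

theorem splitSum_apply (α : ∀ k, V (ι k) ⟶ X) (β : ∀ k, X ⟶ V (ι k)) (h : X ⟶ W) :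
    splitSum 𝕂 V W α β h = ∑ k, lof 𝕂 I _ (ι k) (β k ⊗ₜ (α k ≫ h)) := by
  simp [splitSum]

variable {𝕂 V W}

theorem compSum_comp_splitSum {α : ∀ k, V (ι k) ⟶ X} {β : ∀ k, X ⟶ V (ι k)}
    (hαβ : ∑ k, β k ≫ α k = 𝟙 X) :
    compSum 𝕂 V X W ∘ₗ splitSum 𝕂 V W α β = LinearMap.id := by
  ext h
  simp only [LinearMap.comp_apply, splitSum_apply, map_sum, compSum_lof_tmul,
    Preadditive.sum_comp_comp_eq_self hαβ, LinearMap.id_apply]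

theorem lof_tmul_comp (hV : IsDominatingFamily 𝕂 V) {i j : I} (u : V j ⟶ V i)
    (f : X ⟶ V j) (g : V i ⟶ W) :
    lof 𝕂 I (fun i => (X ⟶ V i) ⊗[𝕂] (V i ⟶ W)) j (f ⊗ₜ (u ≫ g)) =
      lof 𝕂 I _ i ((f ≫ u) ⊗ₜ g) := by
  by_cases hji : j = i
  · subst hji
    obtain ⟨c, rfl⟩ := (hV.simple j).2 u
    simp [tmul_smul, smul_tmul]
  · simp [hV.hom_eq_zero hji u]

theorem splitSum_comp_compSum (hV : IsDominatingFamily 𝕂 V) {α : ∀ k, V (ι k) ⟶ X}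
    {β : ∀ k, X ⟶ V (ι k)} (hαβ : ∑ k, β k ≫ α k = 𝟙 X) :
    splitSum 𝕂 V W α β ∘ₗ compSum 𝕂 V X W = LinearMap.id := by
  refine DirectSum.linearMap_ext 𝕂 fun i => TensorProduct.ext' fun f g => ?_
  simp only [LinearMap.comp_apply, compSum_lof_tmul, splitSum_apply, LinearMap.id_apply]
  simp only [← Category.assoc, hV.lof_tmul_comp, ← map_sum, ← sum_tmul]
  simp only [Category.assoc, Preadditive.sum_comp_comp_eq_self hαβ]

end IsDominatingFamily

open TensorProduct DirectSum in
/-- If a `𝕂`-linear category admits a dominating family `{V i}_{i ∈ I}` of simple objects,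
then for all objects `X`, `W` the `𝕂`-linear map
`⊕_{i ∈ I} Hom(X, V i) ⊗[𝕂] Hom(V i, W) → Hom(X, W)` given on each summand by
`f ⊗ g ↦ g ∘ f` is an isomorphism of `𝕂`-vector spaces. -/
theorem stmt_2 {𝕂 : Type*} [Field 𝕂] {C : Type*} [Category C]
    [Preadditive C] [Linear 𝕂 C] {I : Type*} [DecidableEq I] {V : I → C}
    (hV : IsDominatingFamily 𝕂 V) (X W : C) :
    Function.Bijective
      (DirectSum.toModule 𝕂 I (X ⟶ W) (fun i =>
        TensorProduct.lift (LinearMap.mk₂ 𝕂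
          (fun (f : X ⟶ V i) (g : V i ⟶ W) => f ≫ g)
          (by intros; simp) (by intros; simp) (by intros; simp) (by intros; simp))) :
        (⨁ i : I, (X ⟶ V i) ⊗[𝕂] (V i ⟶ W)) →ₗ[𝕂] (X ⟶ W)) := by
  change Function.Bijective (IsDominatingFamily.compSum 𝕂 V X W)
  obtain ⟨n, ι, α, β, hαβ⟩ := hV.dominates X
  exact Function.bijective_iff_has_inverse.2 ⟨IsDominatingFamily.splitSum 𝕂 V W α β,
    LinearMap.congr_fun (hV.splitSum_comp_compSum hαβ.symm),
    LinearMap.congr_fun (IsDominatingFamily.compSum_comp_splitSum hαβ.symm)⟩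
end

section
/- Let 𝕂 be a field and C a 𝕂-linear category admitting a dominating family {V_i}_{i∈I} of simple objects. Fix i ∈ I and an object V of C. Since V_i is simple, for every f : V → V_i and g : V_i → V there is a unique scalar ⟨f, g⟩ ∈ 𝕂 with f ∘ g = ⟨f, g⟩ · id_{V_i}. Then the 𝕂-bilinear pairing Hom(V, V_i) × Hom(V_i, V) → 𝕂, (f, g) ↦ ⟨f, g⟩, is non-degenerate. -/
/-!
Splitting `𝟙 X = ∑ k, β k ≫ α k` through the dominating family shows that a morphism out of
(or into) `X` vanishes as soon as all its composites with morphisms from (or to) the `V j` do.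
For a morphism into or out of `V i`, only `j = i` matters since `Hom(V j, V i) = 0` otherwise,
and there the composites are the scalars `p f g`.
-/

open CategoryTheory

namespace IsDominatingFamily

variable {𝕂 : Type*} [Field 𝕂] {C : Type*} [Category C] [Preadditive C] [Linear 𝕂 C]
  {I : Type*} {V : I → C}

theorem eq_zero_of_forall_comp_left (hV : IsDominatingFamily 𝕂 V) {X Y : C} (f : X ⟶ Y)
    (h : ∀ j (g : V j ⟶ X), g ≫ f = 0) : f = 0 := by
  obtain ⟨n, ι, α, β, hdom⟩ := hV.dominates X
  calc f = 𝟙 X ≫ f := (Category.id_comp f).symm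
    _ = ∑ k, β k ≫ α k ≫ f := by rw [hdom, Preadditive.sum_comp]; simp only [Category.assoc]
    _ = 0 := Finset.sum_eq_zero fun k _ => by rw [h, Limits.comp_zero]

theorem eq_zero_of_forall_comp_right (hV : IsDominatingFamily 𝕂 V) {X Y : C} (g : Y ⟶ X)
    (h : ∀ j (f : X ⟶ V j), g ≫ f = 0) : g = 0 := by
  obtain ⟨n, ι, α, β, hdom⟩ := hV.dominates X
  calc g = g ≫ 𝟙 X := (Category.comp_id g).symm
    _ = ∑ k, (g ≫ β k) ≫ α k := by rw [hdom, Preadditive.comp_sum]; simp only [Category.assoc]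
    _ = 0 := Finset.sum_eq_zero fun k _ => by rw [h, Limits.zero_comp]

theorem eq_zero_of_forall_comp_left_self (hV : IsDominatingFamily 𝕂 V) {i : I} {X : C}
    (f : X ⟶ V i) (h : ∀ g : V i ⟶ X, g ≫ f = 0) : f = 0 := by
  refine hV.eq_zero_of_forall_comp_left f fun j g => ?_
  by_cases hj : j = i
  · subst hj
    exact h g
  · exact hV.hom_eq_zero hj (g ≫ f)

theorem eq_zero_of_forall_comp_right_self (hV : IsDominatingFamily 𝕂 V) {i : I} {X : C}
    (g : V i ⟶ X) (h : ∀ f : X ⟶ V i, g ≫ f = 0) : g = 0 := by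
  refine hV.eq_zero_of_forall_comp_right g fun j f => ?_
  by_cases hj : j = i
  · subst hj
    exact h f
  · exact hV.hom_eq_zero (Ne.symm hj) (g ≫ f)

end IsDominatingFamily

/-- Let `{V i}_{i ∈ I}` be a dominating family of simple objects of a `𝕂`-linear category,
fix `i ∈ I` and an object `X`, and let `p : Hom(X, V i) × Hom(V i, X) → 𝕂` be the pairing
characterized by `f ∘ g = p f g • 𝟙 (V i)` (uniqueness coming from simplicity of `V i`).
Then this bilinear pairing is non-degenerate. -/
theorem stmt_3 {𝕂 : Type*} [Field 𝕂] {C : Type*} [Category C]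
    [Preadditive C] [Linear 𝕂 C] {I : Type*} {V : I → C}
    (hV : IsDominatingFamily 𝕂 V) (i : I) (X : C)
    (p : (X ⟶ V i) → (V i ⟶ X) → 𝕂)
    (hp : ∀ (f : X ⟶ V i) (g : V i ⟶ X), g ≫ f = p f g • 𝟙 (V i)) :
    (∀ f : X ⟶ V i, f ≠ 0 → ∃ g : V i ⟶ X, p f g ≠ 0) ∧
    (∀ g : V i ⟶ X, g ≠ 0 → ∃ f : X ⟶ V i, p f g ≠ 0) := by
  constructor
  · intro f hf
    by_contra! h
    exact hf (hV.eq_zero_of_forall_comp_left_self f fun g => by rw [hp, h g, zero_smul])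
  · intro g hg
    by_contra! h
    exact hg (hV.eq_zero_of_forall_comp_right_self g fun f => by rw [hp, h f, zero_smul])
end

section
/- (Fusion formula.) Let 𝕂 be a field and C a 𝕂-linear category admitting a dominating family {V_i}_{i∈I} of simple objects, and let V be an object of C. Suppose that for each i in the (finite) set of indices with Hom(V_i, V) ≠ 0 we are given a basis (f_i)_1, …, (f_i)_{n_i} of Hom(V, V_i) and morphisms (g_i)^1, …, (g_i)^{n_i} in Hom(V_i, V) satisfying (f_i)_h ∘ (g_i)^k = δ_h^k · id_{V_i} for all h, k. Then id_V = Σ_{i} Σ_{j=1}^{n_i} (g_i)^j ∘ (f_i)_j. -/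
/-! The endomorphism `P = ∑ bᵢⱼ ≫ gᵢⱼ` of `X` fixes every basis vector of `Hom(X, V i)`:
biorthogonality handles the block of index `i`, and the other blocks factor through
`Hom(V i', V i) = 0`. Hence `P ≫ β = β` for every `β : X ⟶ V i`, and since `𝟙 X` factors
through the `V i`, this forces `P = 𝟙 X`. Indices outside `S` cause no trouble: if `n i ≠ 0`,
then `g i k ≫ b i k = 𝟙 (V i) ≠ 0` gives `g i k ≠ 0`, so `i ∈ S`. -/

open CategoryTheory

namespace IsDominatingFamily

variable {𝕂 : Type*} [Field 𝕂] {C : Type*} [Category C] [Preadditive C] [Linear 𝕂 C]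
  {I : Type*} {V : I → C}

theorem hom_ext (hV : IsDominatingFamily 𝕂 V) {Y X : C} {f f' : Y ⟶ X}
    (h : ∀ i (β : X ⟶ V i), f ≫ β = f' ≫ β) : f = f' := by
  obtain ⟨m, ι, α, β, hX⟩ := hV.dominates X
  calc f = f ≫ 𝟙 X := (Category.comp_id f).symm
    _ = ∑ k, (f ≫ β k) ≫ α k := by simp only [hX, Preadditive.comp_sum, Category.assoc]
    _ = ∑ k, (f' ≫ β k) ≫ α k := by simp only [h]
    _ = f' := by simp only [Category.assoc, ← Preadditive.comp_sum, ← hX, Category.comp_id]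

theorem hom_ext_of_basis (hV : IsDominatingFamily 𝕂 V) {Y X : C} {n : I → ℕ}
    (b : ∀ i, Module.Basis (Fin (n i)) 𝕂 (X ⟶ V i)) {f f' : Y ⟶ X}
    (h : ∀ i k, f ≫ (b i k : X ⟶ V i) = f' ≫ b i k) : f = f' :=
  hV.hom_ext fun i β => by
    simpa using LinearMap.congr_fun
      ((b i).ext (f₁ := Linear.leftComp 𝕂 (V i) f) (f₂ := Linear.leftComp 𝕂 (V i) f') (h i)) β

theorem sum_comp_eq_of_biorthogonal (hV : IsDominatingFamily 𝕂 V) {X : C} {S : Finset I}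
    {n : I → ℕ} (f : ∀ i, Fin (n i) → (X ⟶ V i)) (g : ∀ i, Fin (n i) → (V i ⟶ X))
    (hfg : ∀ i h k, g i k ≫ f i h = if h = k then 𝟙 (V i) else 0)
    {i : I} (hi : i ∈ S) (h : Fin (n i)) :
    (∑ i' ∈ S, ∑ j, f i' j ≫ g i' j) ≫ f i h = f i h := by
  rw [Preadditive.sum_comp, Finset.sum_eq_single_of_mem i hi]
  · simp [Preadditive.sum_comp, hfg, apply_ite]
  · intro i' _ hi'
    simp [Preadditive.sum_comp, hV.hom_eq_zero hi' (g i' _ ≫ f i h)]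

end IsDominatingFamily

/-- **Fusion formula.** Let `{V i}_{i ∈ I}` be a dominating family of simple objects of a
`𝕂`-linear category and `X` an object. Let `S` be the (finite) set of indices `i` with
`Hom(V i, X) ≠ 0`. Suppose that for each `i` we have a basis `b i 1, …, b i (n i)` of
`Hom(X, V i)` and morphisms `g i 1, …, g i (n i)` in `Hom(V i, X)` with
`(b i h) ∘ (g i k) = δ_h^k • 𝟙 (V i)`. Then `𝟙 X = ∑ i ∈ S, ∑ j, (g i j) ∘ (b i j)`. -/
theorem stmt_4 {𝕂 : Type*} [Field 𝕂] {C : Type*} [Category C]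
    [Preadditive C] [Linear 𝕂 C] {I : Type*} {V : I → C}
    (hV : IsDominatingFamily 𝕂 V) (X : C)
    (S : Finset I) (hS : ∀ i : I, i ∈ S ↔ ∃ g : V i ⟶ X, g ≠ 0)
    (n : I → ℕ) (b : ∀ i : I, Module.Basis (Fin (n i)) 𝕂 (X ⟶ V i))
    (g : ∀ i : I, Fin (n i) → (V i ⟶ X))
    (hg : ∀ (i : I) (h k : Fin (n i)),
      g i k ≫ (b i h : X ⟶ V i) = if h = k then 𝟙 (V i) else 0) :
    𝟙 X = ∑ i ∈ S, ∑ j : Fin (n i), (b i j : X ⟶ V i) ≫ g i j := by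
  have mem_S : ∀ i (h : Fin (n i)), i ∈ S := fun i h =>
    (hS i).2 ⟨g i h, fun h0 => (hV.simple i).1 (by simpa [h0] using (hg i h h).symm)⟩
  refine (hV.hom_ext_of_basis b fun i h => ?_).symm
  rw [Category.id_comp]
  exact hV.sum_comp_eq_of_biorthogonal (fun i j => b i j) g hg (mem_S i h) h
end
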